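/- Let ν₁ and ν₂ be probability measures on S, let d̂ be a probability mass function on S̃, and let ε ≥ 0, η ≥ 0, R_max ≥ 0, and H ≥ 0 be real numbers. Suppose R : S → ℝ is measurable with 0 ≤ R(s) ≤ R_max for all s ∈ S, R̃ : S̃ → ℝ satisfies R̃(s̃) ≥ 0 for all s̃ ∈ S̃, and R(s) = R̃(φ(s)) for all s ∈ S (the reward factors exactly through the abstraction). If D_KL(φ₊ν₁ ‖ d̂) ≤ ε and D_KL(d̂ ‖ φ₊ν₂) ≤ η, then H·∫ R dν₁ − H·∫ R dν₂ ≤ H·R_max·(√(2ε) + √(2η)). -/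

import Mathlib

/-!
Because `R = R̃ ∘ φ`, both expectations are finite sums against the pushforward pmfs, and the
gap splits through `d̂` as `∑ R̃ (φ₊ν₁ - d̂) + ∑ R̃ (d̂ - φ₊ν₂)`. Each term is at most
`(R_max / 2) ‖p - q‖₁`: only the values of `R̃` on the support of `p` matter, and there the fibre
of `φ` is nonempty, so `R̃ ≤ R_max`. The `ℓ¹` distance is controlled through the Hellinger
distance, `‖p - q‖₁² ≤ 4 ∑ (√p - √q)² ≤ 4 KL(p ‖ q)`, a Pinsker-type bound that loses a factor
`√2`, which the constant `√(2ε)` absorbs.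
-/

open MeasureTheory Real
open scoped BigOperators

/-- A probability mass function on a finite type, as a real-valued function. -/
def IsPmf {T : Type*} [Fintype T] (p : T → ℝ) : Prop :=
  (∀ t, 0 ≤ p t) ∧ ∑ t, p t = 1

open Classical in
/-- Kullback–Leibler divergence between pmfs on a finite type, valued in `EReal`,
with conventions `0 · log 0 = 0` and `⊤` when absolute continuity fails. -/
noncomputable def klDiv {T : Type*} [Fintype T] (p q : T → ℝ) : EReal :=
  if ∀ t, q t = 0 → p t = 0 then ((∑ t, p t * Real.log (p t / q t) : ℝ) : EReal)
  else ⊤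

/-- Pushforward of a measure under `φ`, as a real-valued mass function on a finite type. -/
noncomputable def pushforward {S : Type*} [MeasurableSpace S] {T : Type*}
    (φ : S → T) (ν : Measure S) : T → ℝ :=
  fun t => (ν (φ ⁻¹' {t})).toReal

/-- Square root on `EReal`, sending `⊤` to `⊤`. -/
noncomputable def esqrt (x : EReal) : EReal :=
  if x = ⊤ then ⊤ else ((Real.sqrt x.toReal : ℝ) : EReal)

theorem sq_sqrt_sub_sqrt_le_mul_log_div {p q : ℝ} (hp : 0 ≤ p) (hq : 0 ≤ q)
    (hpq : q = 0 → p = 0) :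
    (√p - √q) ^ 2 ≤ p * log (p / q) - p + q := by
  rcases hq.eq_or_lt with rfl | hq
  · simp [hpq rfl]
  rcases hp.eq_or_lt with rfl | hp
  · simp [sq_sqrt hq.le]
  -- `log (p / q) = 2 log (√p / √q) ≥ 2 (1 - √q / √p)`
  have hlog : 2 * (1 - √q / √p) ≤ log (p / q) := by
    have h := one_sub_inv_le_log_of_pos (div_pos (sqrt_pos.2 hp) (sqrt_pos.2 hq))
    rw [inv_div, ← sqrt_div hp.le, log_sqrt (div_nonneg hp.le hq.le)] at h
    linarith
  have hcross : p * (√q / √p) = √p * √q := by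
    field_simp
    rw [sq_sqrt hp.le]
  nlinarith [mul_le_mul_of_nonneg_left hlog hp.le, sq_sqrt hp.le, sq_sqrt hq.le]

section Pmf

variable {T : Type*} [Fintype T] {p q : T → ℝ}

theorem IsPmf.sum_sqrt_sub_sqrt_sq_le (hp : IsPmf p) (hq : IsPmf q)
    (hpq : ∀ t, q t = 0 → p t = 0) :
    ∑ t, (√(p t) - √(q t)) ^ 2 ≤ ∑ t, p t * log (p t / q t) := by
  calc ∑ t, (√(p t) - √(q t)) ^ 2
      ≤ ∑ t, (p t * log (p t / q t) - p t + q t) :=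
        Finset.sum_le_sum fun t _ => sq_sqrt_sub_sqrt_le_mul_log_div (hp.1 t) (hq.1 t) (hpq t)
    _ = ∑ t, p t * log (p t / q t) := by
        rw [Finset.sum_add_distrib, Finset.sum_sub_distrib, hp.2, hq.2]
        ring

-- Cauchy–Schwarz after factoring `p - q = (√p - √q)(√p + √q)`,
-- with `∑ (√p + √q)² ≤ 2 ∑ (p + q) = 4`.
theorem IsPmf.sum_abs_sub_sq_le (hp : IsPmf p) (hq : IsPmf q) :
    (∑ t, |p t - q t|) ^ 2 ≤ 4 * ∑ t, (√(p t) - √(q t)) ^ 2 := by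
  have hfactor : ∀ t, |p t - q t| = |√(p t) - √(q t)| * |√(p t) + √(q t)| := fun t => by
    rw [← abs_mul, mul_comm, ← sq_sub_sq, sq_sqrt (hp.1 t), sq_sqrt (hq.1 t)]
  have hsum_add : ∑ t, (√(p t) + √(q t)) ^ 2 ≤ 4 := by
    calc ∑ t, (√(p t) + √(q t)) ^ 2 ≤ ∑ t, (2 * p t + 2 * q t) :=
          Finset.sum_le_sum fun t _ => by
            nlinarith [sq_sqrt (hp.1 t), sq_sqrt (hq.1 t), sq_nonneg (√(p t) - √(q t))]
      _ = 4 := by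
          rw [Finset.sum_add_distrib, ← Finset.mul_sum, ← Finset.mul_sum, hp.2, hq.2]
          norm_num
  calc (∑ t, |p t - q t|) ^ 2
      = (∑ t, |√(p t) - √(q t)| * |√(p t) + √(q t)|) ^ 2 := by simp only [hfactor]
    _ ≤ (∑ t, |√(p t) - √(q t)| ^ 2) * ∑ t, |√(p t) + √(q t)| ^ 2 :=
        Finset.sum_mul_sq_le_sq_mul_sq _ _ _
    _ = (∑ t, (√(p t) - √(q t)) ^ 2) * ∑ t, (√(p t) + √(q t)) ^ 2 := by simp only [sq_abs]
    _ ≤ 4 * ∑ t, (√(p t) - √(q t)) ^ 2 := by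
        rw [mul_comm]
        exact mul_le_mul_of_nonneg_right hsum_add (Finset.sum_nonneg fun t _ => sq_nonneg _)

theorem IsPmf.sum_mul_sub_le (hp : IsPmf p) (hq : IsPmf q) {f : T → ℝ} {M : ℝ}
    (hf0 : ∀ t, 0 ≤ f t) (hfM : ∀ t, p t ≠ 0 → f t ≤ M) :
    ∑ t, f t * (p t - q t) ≤ M / 2 * ∑ t, |p t - q t| := by
  have hpointwise : ∀ t, f t * (p t - q t) ≤ M / 2 * (|p t - q t| + (p t - q t)) := fun t => by
    rcases le_or_gt (p t) (q t) with hle | hlt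
    · rw [abs_of_nonpos (sub_nonpos.2 hle)]
      nlinarith [hf0 t]
    · rw [abs_of_pos (sub_pos.2 hlt)]
      nlinarith [hfM t (lt_of_le_of_lt (hq.1 t) hlt).ne']
  calc ∑ t, f t * (p t - q t) ≤ ∑ t, M / 2 * (|p t - q t| + (p t - q t)) :=
        Finset.sum_le_sum fun t _ => hpointwise t
    _ = M / 2 * ∑ t, |p t - q t| := by
        rw [← Finset.mul_sum, Finset.sum_add_distrib, Finset.sum_sub_distrib, hp.2, hq.2]
        ring

theorem klDiv_le_coe {ε : ℝ} (h : klDiv p q ≤ (ε : EReal)) :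
    (∀ t, q t = 0 → p t = 0) ∧ ∑ t, p t * log (p t / q t) ≤ ε := by
  classical
  unfold klDiv at h
  split_ifs at h with hpq
  · exact ⟨hpq, EReal.coe_le_coe_iff.1 h⟩
  · exact absurd h (not_le.2 (EReal.coe_lt_top ε))

theorem IsPmf.sum_mul_sub_le_of_klDiv_le (hp : IsPmf p) (hq : IsPmf q) {f : T → ℝ} {M ε : ℝ}
    (hKL : klDiv p q ≤ (ε : EReal)) (hε : 0 ≤ ε) (hM : 0 ≤ M)
    (hf0 : ∀ t, 0 ≤ f t) (hfM : ∀ t, p t ≠ 0 → f t ≤ M) :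
    ∑ t, f t * (p t - q t) ≤ M * √(2 * ε) := by
  obtain ⟨hpq, hKL⟩ := klDiv_le_coe hKL
  have hL1 : ∑ t, |p t - q t| ≤ 2 * √ε := by
    have hsq : (∑ t, |p t - q t|) ^ 2 ≤ (2 * √ε) ^ 2 := by
      rw [mul_pow, sq_sqrt hε]
      linarith [hp.sum_abs_sub_sq_le hq, hp.sum_sqrt_sub_sqrt_sq_le hq hpq]
    exact (pow_le_pow_iff_left₀ (by positivity) (by positivity) two_ne_zero).1 hsq
  calc ∑ t, f t * (p t - q t) ≤ M / 2 * ∑ t, |p t - q t| := hp.sum_mul_sub_le hq hf0 hfM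
    _ ≤ M / 2 * (2 * √ε) := by gcongr
    _ ≤ M * √(2 * ε) := by
        rw [← mul_assoc, div_mul_cancel₀ M two_ne_zero]
        gcongr
        linarith

end Pmf

section Pushforward

variable {S T : Type*} [MeasurableSpace S] {φ : S → T}

theorem le_of_pushforward_ne_zero {ν : Measure S} {g : T → ℝ} {M : ℝ} (hg : ∀ s, g (φ s) ≤ M)
    {t : T} (ht : pushforward φ ν t ≠ 0) : g t ≤ M := by
  obtain ⟨s, rfl⟩ : ∃ s, φ s = t := by
    by_contra! hempty
    exact ht (by simp [pushforward, Set.preimage_singleton_eq_empty.2 (by simpa using hempty)])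
  exact hg s

variable [Fintype T] [MeasurableSpace T] [MeasurableSingletonClass T]

theorem isPmf_pushforward (hφ : Measurable φ) (ν : Measure S) [IsProbabilityMeasure ν] :
    IsPmf (pushforward φ ν) := by
  refine ⟨fun t => ENNReal.toReal_nonneg, ?_⟩
  have hfibers : ∑ t, ν (φ ⁻¹' {t}) = 1 := by
    rw [sum_measure_preimage_singleton _ fun t _ => hφ (measurableSet_singleton t)]
    simp
  simp only [pushforward]
  rw [← ENNReal.toReal_sum fun t _ => measure_ne_top ν _, hfibers, ENNReal.toReal_one]

theorem integral_comp_eq_sum_mul_pushforward (hφ : Measurable φ) (ν : Measure S)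
    [IsFiniteMeasure ν] (g : T → ℝ) :
    ∫ s, g (φ s) ∂ν = ∑ t, g t * pushforward φ ν t := by
  rw [← integral_map hφ.aemeasurable (measurable_of_finite g).aestronglyMeasurable,
    integral_fintype .of_finite]
  refine Finset.sum_congr rfl fun t _ => ?_
  rw [measureReal_def, Measure.map_apply hφ (measurableSet_singleton t), smul_eq_mul, mul_comm]
  rfl

end Pushforward

theorem visitation_suboptimality_bound_exact_abstraction_general
    {S : Type*} [MeasurableSpace S]
    {St : Type*} [Fintype St] [MeasurableSpace St] [MeasurableSingletonClass St]
    (φ : S → St) (hφ : Measurable φ)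
    (ν₁ ν₂ : Measure S) [IsProbabilityMeasure ν₁] [IsProbabilityMeasure ν₂]
    (dhat : St → ℝ) (hdhat : IsPmf dhat)
    (ε η Rmax H : ℝ)
    (hε : 0 ≤ ε) (hη : 0 ≤ η) (hRmax : 0 ≤ Rmax) (hH : 0 ≤ H)
    (R : S → ℝ) (hRle : ∀ s, R s ≤ Rmax)
    (Rtil : St → ℝ) (hRtil0 : ∀ t, 0 ≤ Rtil t)
    (hfactor : ∀ s, R s = Rtil (φ s))
    (hKL1 : klDiv (pushforward φ ν₁) dhat ≤ (ε : EReal))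
    (hKL2 : klDiv dhat (pushforward φ ν₂) ≤ (η : EReal)) :
    H * ∫ s, R s ∂ν₁ - H * ∫ s, R s ∂ν₂ ≤
      H * Rmax * (Real.sqrt (2 * ε) + Real.sqrt (2 * η)) := by
  set p₁ := pushforward φ ν₁
  set p₂ := pushforward φ ν₂
  have hRtil_le (ν : Measure S) (t : St) : pushforward φ ν t ≠ 0 → Rtil t ≤ Rmax :=
    le_of_pushforward_ne_zero fun s => hfactor s ▸ hRle s
  have hac₂ := (klDiv_le_coe hKL2).1
  have h₁ : ∑ t, Rtil t * (p₁ t - dhat t) ≤ Rmax * √(2 * ε) :=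
    (isPmf_pushforward hφ ν₁).sum_mul_sub_le_of_klDiv_le hdhat hKL1 hε hRmax hRtil0
      (hRtil_le ν₁)
  have h₂ : ∑ t, Rtil t * (dhat t - p₂ t) ≤ Rmax * √(2 * η) :=
    hdhat.sum_mul_sub_le_of_klDiv_le (isPmf_pushforward hφ ν₂) hKL2 hη hRmax hRtil0
      fun t ht => hRtil_le ν₂ t (mt (hac₂ t) ht)
  have hdiff : ∫ s, R s ∂ν₁ - ∫ s, R s ∂ν₂
      = ∑ t, Rtil t * (p₁ t - dhat t) + ∑ t, Rtil t * (dhat t - p₂ t) := by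
    simp only [hfactor, integral_comp_eq_sum_mul_pushforward hφ]
    rw [← Finset.sum_add_distrib, ← Finset.sum_sub_distrib]
    exact Finset.sum_congr rfl fun t _ => by ring
  rw [← mul_sub, mul_assoc, hdiff]
  gcongr
  linarith

/-- The case `α = 0` of Theorem 5.1, where the reward factors exactly through
the abstraction. -/
theorem visitation_suboptimality_bound_exact_abstraction
    {S : Type*} [MeasurableSpace S]
    {St : Type*} [Fintype St] [MeasurableSpace St] [MeasurableSingletonClass St]
    (φ : S → St) (hφ : Measurable φ)
    (ν₁ ν₂ : Measure S) [IsProbabilityMeasure ν₁] [IsProbabilityMeasure ν₂]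
    (dhat : St → ℝ) (hdhat : IsPmf dhat)
    (ε η Rmax H : ℝ)
    (hε : 0 ≤ ε) (hη : 0 ≤ η) (hRmax : 0 ≤ Rmax) (hH : 0 ≤ H)
    (R : S → ℝ) (hRmeas : Measurable R) (hR0 : ∀ s, 0 ≤ R s) (hRle : ∀ s, R s ≤ Rmax)
    (Rtil : St → ℝ) (hRtil0 : ∀ t, 0 ≤ Rtil t)
    (hfactor : ∀ s, R s = Rtil (φ s))
    (hKL1 : klDiv (pushforward φ ν₁) dhat ≤ (ε : EReal))
    (hKL2 : klDiv dhat (pushforward φ ν₂) ≤ (η : EReal)) :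
    H * ∫ s, R s ∂ν₁ - H * ∫ s, R s ∂ν₂ ≤
      H * Rmax * (Real.sqrt (2 * ε) + Real.sqrt (2 * η)) :=
  visitation_suboptimality_bound_exact_abstraction_general φ hφ ν₁ ν₂ dhat hdhat ε η Rmax H hε hη
    hRmax hH R hRle Rtil hRtil0 hfactor hKL1 hKL2
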